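/- arXiv:hep-th/0308121 — 5 statements merged into one kernel-verified Lean document; each statement's English description precedes it below -/
import Mathlib

section
/- Let s ∈ ℂ with Re(s) > 0. Then the function t ↦ (Σ_{n=0}^∞ e^{-2^n t}) · t^{s-1} is integrable on (0, ∞), and ∫₀^∞ (Σ_{n=0}^∞ e^{-2^n t}) t^{s-1} dt = Γ(s)/(1 − 2^{-s}), where 2^{-s} = exp(−s log 2) and Γ is the complex Gamma function. -/
open Real Filter Topology MeasureTheory Set
open scoped ENNReal

/-!
Each term is a rescaled Gamma integral: `∫₀^∞ e^{-λt} t^{s-1} dt = λ^{-s} Γ(s)`, and the integrals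
of the absolute values are `λ^{-Re s} Γ(Re s)`. For `λ = 2ⁿ` these are summable, so the series may
be integrated termwise, and `Σ 2^{-ns} Γ(s)` is a geometric series.
-/

theorem integrable_tsum_of_summable_integral_norm {α ι E : Type*} [MeasurableSpace α]
    {μ : Measure α} [Countable ι] [NormedAddCommGroup E] [CompleteSpace E]
    [SecondCountableTopology E] [MeasurableSpace E] [BorelSpace E] {F : ι → α → E}
    (hF_int : ∀ i, Integrable (F i) μ) (hF_sum : Summable fun i ↦ ∫ a, ‖F i a‖ ∂μ) :
    Integrable (fun a ↦ ∑' i, F i a) μ := by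
  refine ⟨(AEMeasurable.tsum fun i ↦ (hF_int i).aemeasurable).aestronglyMeasurable, ?_⟩
  have h_lintegral : ∑' i, ∫⁻ a, ‖F i a‖ₑ ∂μ < ∞ := by
    simp_rw [← ofReal_integral_norm_eq_lintegral_enorm (hF_int _),
      ← ENNReal.ofReal_tsum_of_nonneg (fun i ↦ integral_nonneg fun a ↦ norm_nonneg _) hF_sum]
    exact ENNReal.ofReal_lt_top
  calc ∫⁻ a, ‖∑' i, F i a‖ₑ ∂μ ≤ ∫⁻ a, ∑' i, ‖F i a‖ₑ ∂μ :=
        lintegral_mono fun a ↦ enorm_tsum_le_tsum_enorm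
    _ = ∑' i, ∫⁻ a, ‖F i a‖ₑ ∂μ := lintegral_tsum fun i ↦ (hF_int i).aemeasurable.enorm
    _ < ∞ := h_lintegral

section ExpNegMul

variable {s : ℂ} {p : ℝ}

theorem mellinConvergent_exp_neg_mul (hs : 0 < s.re) (hp : 0 < p) :
    MellinConvergent (fun t : ℝ ↦ (rexp (-(p * t)) : ℂ)) s := by
  refine (MellinConvergent.comp_mul_left (f := fun t : ℝ ↦ (rexp (-t) : ℂ)) hp).mpr ?_
  simpa only [MellinConvergent, smul_eq_mul, mul_comm, Complex.ofReal_exp, Complex.ofReal_neg]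
    using Complex.GammaIntegral_convergent hs

theorem mellin_exp_neg_mul (hs : 0 < s.re) (hp : 0 < p) :
    mellin (fun t : ℝ ↦ (rexp (-(p * t)) : ℂ)) s = (p : ℂ) ^ (-s) * Complex.Gamma s := by
  rw [mellin_comp_mul_left (fun t : ℝ ↦ (rexp (-t) : ℂ)) s hp, Complex.Gamma_eq_integral hs,
    Complex.GammaIntegral_eq_mellin, smul_eq_mul]

theorem integral_norm_cpow_smul_exp_neg_mul (hs : 0 < s.re) (hp : 0 < p) :
    ∫ t : ℝ in Ioi 0, ‖(t : ℂ) ^ (s - 1) • (rexp (-(p * t)) : ℂ)‖ =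
      p ^ (-s.re) * Real.Gamma s.re := by
  rw [Real.rpow_neg hp.le, ← Real.inv_rpow hp.le, ← one_div,
    ← integral_rpow_mul_exp_neg_mul_Ioi hs hp]
  refine setIntegral_congr_fun measurableSet_Ioi fun t ht ↦ ?_
  rw [norm_smul, Complex.norm_real, norm_of_nonneg (exp_nonneg _),
    Complex.norm_cpow_eq_rpow_re_of_pos ht, Complex.sub_re, Complex.one_re]

end ExpNegMul

section TsumExpNegMul

variable {s : ℂ} {ι : Type*} [Countable ι] {p : ι → ℝ}

theorem mellinConvergent_tsum_exp_neg_mul (hs : 0 < s.re) (hp : ∀ i, 0 < p i)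
    (h_sum : Summable fun i ↦ p i ^ (-s.re)) :
    MellinConvergent (fun t ↦ ((∑' i, rexp (-(p i * t)) : ℝ) : ℂ)) s := by
  rw [MellinConvergent, IntegrableOn]
  simp_rw [Complex.ofReal_tsum, ← tsum_const_smul'']
  refine integrable_tsum_of_summable_integral_norm
    (fun i ↦ mellinConvergent_exp_neg_mul hs (hp i)) ?_
  simpa only [integral_norm_cpow_smul_exp_neg_mul hs (hp _)] using h_sum.mul_right _

theorem hasSum_mellin_tsum_exp_neg_mul (hs : 0 < s.re) (hp : ∀ i, 0 < p i)
    (h_sum : Summable fun i ↦ p i ^ (-s.re)) :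
    HasSum (fun i ↦ (p i : ℂ) ^ (-s) * Complex.Gamma s)
      (mellin (fun t ↦ ((∑' i, rexp (-(p i * t)) : ℝ) : ℂ)) s) := by
  rw [mellin]
  simp_rw [Complex.ofReal_tsum, ← tsum_const_smul'', ← mellin_exp_neg_mul hs (hp _)]
  refine hasSum_integral_of_summable_integral_norm
    (fun i ↦ mellinConvergent_exp_neg_mul hs (hp i)) ?_
  simpa only [integral_norm_cpow_smul_exp_neg_mul hs (hp _)] using h_sum.mul_right _

end TsumExpNegMul

section GeometricSpectrum

variable {s : ℂ} {a : ℝ}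

theorem ofReal_pow_cpow_neg (ha : 0 < a) (n : ℕ) :
    ((a ^ n : ℝ) : ℂ) ^ (-s) = Complex.exp (-s * Real.log a) ^ n := by
  rw [Complex.cpow_def_of_ne_zero (by exact_mod_cast (pow_pos ha n).ne'),
    ← Complex.ofReal_log (pow_pos ha n).le, Real.log_pow, ← Complex.exp_nat_mul]
  push_cast
  ring_nf

theorem summable_pow_rpow_neg (ha : 1 < a) {σ : ℝ} (hσ : 0 < σ) :
    Summable fun n : ℕ ↦ (a ^ n) ^ (-σ) := by
  simp_rw [← Real.rpow_pow_comm (zero_le_one.trans ha.le)]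
  exact summable_geometric_of_lt_one (by positivity)
    (Real.rpow_lt_one_of_one_lt_of_neg ha (neg_neg_of_pos hσ))

theorem norm_exp_neg_mul_log_lt_one (ha : 1 < a) (hs : 0 < s.re) :
    ‖Complex.exp (-s * Real.log a)‖ < 1 := by
  rw [Complex.norm_exp, Real.exp_lt_one_iff, Complex.re_mul_ofReal, Complex.neg_re, neg_mul]
  exact neg_neg_of_pos (mul_pos hs (Real.log_pos ha))

theorem mellin_tsum_exp_neg_pow_mul (ha : 1 < a) (hs : 0 < s.re) :
    mellin (fun t ↦ ((∑' n : ℕ, rexp (-(a ^ n * t)) : ℝ) : ℂ)) s =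
      Complex.Gamma s / (1 - Complex.exp (-s * Real.log a)) := by
  have h_geom := (hasSum_geometric_of_norm_lt_one (norm_exp_neg_mul_log_lt_one ha hs)).mul_right
    (Complex.Gamma s)
  simp_rw [← ofReal_pow_cpow_neg (zero_lt_one.trans ha), ← div_eq_inv_mul] at h_geom
  exact (hasSum_mellin_tsum_exp_neg_mul hs (fun n ↦ pow_pos (zero_lt_one.trans ha) n)
    (summable_pow_rpow_neg ha hs)).unique h_geom

end GeometricSpectrum

/-- For `Re s > 0`, the Mellin transform of the partition function
`K(t) = Σ_{n≥0} e^{-2ⁿ t}` converges (the integrand is integrable on `(0,∞)`) and equals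
`Γ(s)/(1 - 2^{-s})`, where `2^{-s} = exp(-s log 2)`. -/
theorem stmt3 (s : ℂ) (hs : 0 < s.re) :
    IntegrableOn (fun t : ℝ =>
      ((∑' n : ℕ, Real.exp (-(2 ^ n * t)) : ℝ) : ℂ) * (t : ℂ) ^ (s - 1))
      (Set.Ioi (0 : ℝ)) ∧
    ∫ t in Set.Ioi (0 : ℝ),
        ((∑' n : ℕ, Real.exp (-(2 ^ n * t)) : ℝ) : ℂ) * (t : ℂ) ^ (s - 1) =
      Complex.Gamma s / (1 - Complex.exp (-s * Real.log 2)) := by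
  simp_rw [mul_comm _ ((_ : ℂ) ^ (s - 1))]
  exact ⟨mellinConvergent_tsum_exp_neg_mul hs (fun n ↦ pow_pos two_pos n)
      (summable_pow_rpow_neg one_lt_two hs),
    mellin_tsum_exp_neg_pow_mul one_lt_two hs⟩
end

section
/- The conductance ⟨g(t)⟩ = Σ_{n=0}^∞ 1/(1 + 2^n/t) satisfies ⟨g(t)⟩/log t → 1/log 2 as t → ∞; that is, its leading large-t behavior is log₂ t. -/
open Real Filter Topology

private lemma term_le_geom {t : ℝ} (ht : 0 < t) (n : ℕ) :
    1 / (1 + 2 ^ n / t) ≤ t * (1/2 : ℝ) ^ n := by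
  have h1 : (0:ℝ) < 2 ^ n / t := by positivity
  have h2 : (2:ℝ) ^ n / t ≤ 1 + 2 ^ n / t := by linarith
  calc 1 / (1 + 2 ^ n / t) ≤ 1 / (2 ^ n / t) := one_div_le_one_div_of_le h1 h2
    _ = t * (1/2)^n := by
        rw [one_div_div, div_pow, one_pow, mul_one_div]

private lemma summ {t : ℝ} (ht : 0 < t) :
    Summable (fun n : ℕ => 1 / (1 + 2 ^ n / t)) :=
  Summable.of_nonneg_of_le (fun n => by positivity) (term_le_geom ht)
    ((summable_geometric_of_lt_one (by norm_num) (by norm_num)).mul_left t)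

private lemma key_bounds {t : ℝ} (ht : 2 ≤ t) :
    Real.logb 2 t - 2 ≤ ∑' n : ℕ, 1 / (1 + 2 ^ n / t) ∧
    ∑' n : ℕ, 1 / (1 + 2 ^ n / t) ≤ Real.logb 2 t + 3 := by
  have ht0 : (0:ℝ) < t := by linarith
  set N : ℕ := ⌊Real.logb 2 t⌋₊ with hN
  have hlogb_nonneg : 0 ≤ Real.logb 2 t := Real.logb_nonneg (by norm_num) (by linarith)
  have hN_le : (N : ℝ) ≤ Real.logb 2 t := Nat.floor_le hlogb_nonneg
  have hN_lt : Real.logb 2 t < N + 1 := Nat.lt_floor_add_one _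
  have hrl : (2:ℝ) ^ (Real.logb 2 t) = t := Real.rpow_logb (by norm_num) (by norm_num) ht0
  have h2N : (2:ℝ) ^ N ≤ t := by
    have := Real.rpow_le_rpow_of_exponent_le (by norm_num : (1:ℝ) ≤ 2) hN_le
    rwa [hrl, Real.rpow_natCast] at this
  have h2N1 : t < (2:ℝ) ^ (N+1) := by
    have := Real.rpow_lt_rpow_of_exponent_lt (by norm_num : (1:ℝ) < 2) hN_lt
    rw [hrl] at this
    have h : ((N:ℝ) + 1) = ((N+1 : ℕ) : ℝ) := by push_cast; ring
    rwa [h, Real.rpow_natCast] at this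
  constructor
  · -- lower bound
    have hfin : ∑ i ∈ Finset.range (N+1), (1 - 2 ^ i / t) ≤
        ∑ i ∈ Finset.range (N+1), 1 / (1 + 2 ^ i / t) := by
      apply Finset.sum_le_sum
      intro i _
      have hx : (0:ℝ) ≤ 2 ^ i / t := by positivity
      rw [le_div_iff₀ (by positivity)]
      nlinarith
    have h1 : ∑ i ∈ Finset.range (N+1), 1 / (1 + 2 ^ i / t) ≤
        ∑' n : ℕ, 1 / (1 + 2 ^ n / t) :=
      Summable.sum_le_tsum _ (fun i _ => by positivity) (summ ht0)
    have hgeo : ∑ i ∈ Finset.range (N+1), (2:ℝ) ^ i = 2 ^ (N+1) - 1 := by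
      have := geom_sum_eq (by norm_num : (2:ℝ) ≠ 1) (N+1)
      rw [this]; ring
    have hsum : ∑ i ∈ Finset.range (N+1), (1 - 2 ^ i / t)
        = (N+1 : ℝ) - (2 ^ (N+1) - 1) / t := by
      rw [Finset.sum_sub_distrib, Finset.sum_const, Finset.card_range,
        ← Finset.sum_div, hgeo]
      push_cast; ring
    have hb : (2:ℝ) ^ (N+1) - 1 ≤ 2 * t := by
      have : (2:ℝ)^(N+1) = 2 * 2^N := by ring
      nlinarith
    have : Real.logb 2 t - 2 ≤ (N+1 : ℝ) - (2 ^ (N+1) - 1) / t := by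
      have h2 : ((2:ℝ) ^ (N+1) - 1) / t ≤ 2 := by
        rw [div_le_iff₀ ht0]; linarith
      linarith
    linarith [hsum ▸ hfin, h1, this, hsum]
  · -- upper bound
    have hsplit := Summable.sum_add_tsum_nat_add (f := fun n : ℕ => 1 / (1 + 2 ^ n / t)) (N+1) (summ ht0)
    have hhead : ∑ i ∈ Finset.range (N+1), 1 / (1 + 2 ^ i / t) ≤ (N+1 : ℝ) := by
      calc ∑ i ∈ Finset.range (N+1), 1 / (1 + 2 ^ i / t)
          ≤ ∑ i ∈ Finset.range (N+1), (1:ℝ) := by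
            apply Finset.sum_le_sum
            intro i _
            rw [div_le_one (by positivity)]
            have : (0:ℝ) ≤ 2 ^ i / t := by positivity
            linarith
        _ = (N+1 : ℝ) := by simp
    have htail : ∑' n : ℕ, 1 / (1 + 2 ^ (n + (N+1)) / t) ≤ 2 := by
      have h1 : ∑' n : ℕ, 1 / (1 + 2 ^ (n + (N+1)) / t)
          ≤ ∑' n : ℕ, t * (1/2 : ℝ) ^ (n + (N+1)) := by
        apply Summable.tsum_le_tsum
        · intro n; exact term_le_geom ht0 _
        · exact (summ ht0).comp_injective (add_left_injective (N+1))
        · exact (((summable_geometric_of_lt_one (by norm_num) (by norm_num)).mul_left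
            t).comp_injective (add_left_injective (N+1)))
      have h2 : ∑' n : ℕ, t * (1/2 : ℝ) ^ (n + (N+1))
          = t * (1/2:ℝ) ^ (N+1) * 2 := by
        have : ∀ n : ℕ, t * (1/2 : ℝ) ^ (n + (N+1))
            = (t * (1/2:ℝ)^(N+1)) * (1/2:ℝ)^n := by
          intro n; rw [pow_add]; ring
        rw [tsum_congr this, tsum_mul_left, tsum_geometric_of_lt_one (by norm_num) (by norm_num)]
        norm_num
      have h3 : t * (1/2:ℝ) ^ (N+1) ≤ 1 := by
        rw [div_pow, one_pow, mul_one_div, div_le_one (by positivity)]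
        linarith
      nlinarith [h1, h2 ▸ h1]
    have : ∑' n : ℕ, 1 / (1 + 2 ^ n / t)
        = (∑ i ∈ Finset.range (N+1), 1 / (1 + 2 ^ i / t))
          + ∑' n : ℕ, 1 / (1 + 2 ^ (n + (N+1)) / t) := by
      exact hsplit.symm
    rw [this]
    have : (N : ℝ) + 1 ≤ Real.logb 2 t + 1 := by linarith
    linarith

/-- The conductance `⟨g(t)⟩ = Σ_{n≥0} 1/(1 + 2ⁿ/t)` satisfies
`⟨g(t)⟩/log t → 1/log 2` as `t → ∞`: its leading large-`t` behavior is `log₂ t`. -/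
theorem stmt6 :
    Filter.Tendsto
      (fun t : ℝ => (∑' n : ℕ, 1 / (1 + 2 ^ n / t)) / Real.log t)
      Filter.atTop (𝓝 (1 / Real.log 2)) := by
  have hinv : Tendsto (fun t : ℝ => (Real.log t)⁻¹) atTop (𝓝 0) :=
    Real.tendsto_log_atTop.inv_tendsto_atTop
  have hlow : Tendsto (fun t : ℝ => 1 / Real.log 2 - 2 * (Real.log t)⁻¹) atTop
      (𝓝 (1 / Real.log 2)) := by
    have := (tendsto_const_nhds (x := 1 / Real.log 2) (f := atTop)).sub
      ((hinv.const_mul 2))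
    simpa using this
  have hhigh : Tendsto (fun t : ℝ => 1 / Real.log 2 + 3 * (Real.log t)⁻¹) atTop
      (𝓝 (1 / Real.log 2)) := by
    have := (tendsto_const_nhds (x := 1 / Real.log 2) (f := atTop)).add
      ((hinv.const_mul 3))
    simpa using this
  apply tendsto_of_tendsto_of_tendsto_of_le_of_le' hlow hhigh
  · filter_upwards [eventually_ge_atTop (2:ℝ)] with t ht
    have hlt : (0:ℝ) < Real.log t := Real.log_pos (by linarith)
    have hb := (key_bounds ht).1
    have : (Real.logb 2 t - 2) / Real.log t ≤
        (∑' n : ℕ, 1 / (1 + 2 ^ n / t)) / Real.log t := by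
      gcongr
    calc 1 / Real.log 2 - 2 * (Real.log t)⁻¹
        = (Real.logb 2 t - 2) / Real.log t := by
          rw [Real.logb]
          field_simp
      _ ≤ _ := this
  · filter_upwards [eventually_ge_atTop (2:ℝ)] with t ht
    have hlt : (0:ℝ) < Real.log t := Real.log_pos (by linarith)
    have hb := (key_bounds ht).2
    have : (∑' n : ℕ, 1 / (1 + 2 ^ n / t)) / Real.log t ≤
        (Real.logb 2 t + 3) / Real.log t := by gcongr
    calc (∑' n : ℕ, 1 / (1 + 2 ^ n / t)) / Real.log t
        ≤ (Real.logb 2 t + 3) / Real.log t := this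
      _ = 1 / Real.log 2 + 3 * (Real.log t)⁻¹ := by
          rw [Real.logb]
          field_simp
end

section
/- Let 0 < q < 1 be real, let s ∈ ℂ be arbitrary, and let t ∈ ℂ with Re(t) > 0. Then both series below converge absolutely, all denominators 1 − q^{t+r} are nonzero (since |q^{t+r}| = q^{Re(t)+r} < 1), and Σ_{n=1}^∞ q^{nt} / ([n]_q)^s = (1−q)^s · Σ_{r=0}^∞ ((s)_r / r!) · q^{t+r} / (1 − q^{t+r}), where (s)_r = s(s+1)⋯(s+r−1) is the rising factorial (so (s)_r/r! is the generalized binomial coefficient C(s+r−1, r)), q^{nt} = exp(nt·log q), q^{t+r} = exp((t+r) log q), ([n]_q)^s = exp(s·log [n]_q), and (1−q)^s = exp(s·log(1−q)). -/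
/-!
Since `[n]_q^s = (1 - q^n)^s / (1 - q)^s`, the binomial series
`(1 - y)^{-s} = Σ_r (s)_r / r! · y^r` at `y = q^n` turns the left-hand side into `(1 - q)^s` times
the double series `Σ_{n ≥ 1} Σ_{r ≥ 0} (s)_r / r! · (q^{t+r})^n`. With `w = q^t` this is dominated
by `|w|^{n-1} · |(s)_r / r!| q^r`, so it converges absolutely because `|w| < 1` and the binomial
series has radius `1`. Summing first over `n` instead gives geometric series with sums
`q^{t+r} / (1 - q^{t+r})`.
-/

open Real Filter Topology

theorem ascPochhammer_eval_eq_prod_range {R : Type*} [CommSemiring R] (n : ℕ) (r : R) :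
    (ascPochhammer R n).eval r = ∏ j ∈ Finset.range n, (r + j) := by
  induction n with
  | zero => simp
  | succ n ih => simp [ascPochhammer_succ_right, ih, ← Finset.prod_range_succ]

open Finset in
theorem Ring.multichoose_eq_prod_range_div_factorial {K : Type*} [Field K] [CharZero K]
    (a : K) (n : ℕ) : Ring.multichoose a n = (∏ j ∈ range n, (a + j)) / n.factorial := by
  rw [eq_div_iff (by exact_mod_cast n.factorial_ne_zero), mul_comm, ← nsmul_eq_mul,
    Ring.factorial_nsmul_multichoose_eq_ascPochhammer, Polynomial.ascPochhammer_smeval_eq_eval,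
    ascPochhammer_eval_eq_prod_range]

namespace Complex

theorem hasSum_multichoose_mul_pow (a : ℂ) {x : ℂ} (hx : ‖x‖ < 1) :
    HasSum (fun n ↦ Ring.multichoose a n * x ^ n) (1 / (1 - x) ^ a) := by
  have h := (one_div_one_sub_cpow_hasFPowerSeriesOnBall_zero a).hasSum
    (y := x) (by simpa [← ofReal_norm] using hx)
  simpa [FormalMultilinearSeries.ofScalars_apply_eq, Ring.multichoose_eq, mul_comm] using h

theorem summable_norm_multichoose_mul_pow (a : ℂ) {ρ : ℝ} (h0 : 0 ≤ ρ) (h1 : ρ < 1) :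
    Summable (fun n ↦ ‖Ring.multichoose a n‖ * ρ ^ n) := by
  lift ρ to NNReal using h0
  have hρ : (ρ : ENNReal) < 1 := by exact_mod_cast h1
  simpa [Ring.multichoose_eq] using FormalMultilinearSeries.summable_norm_mul_pow _
    (hρ.trans_le (one_div_one_sub_cpow_hasFPowerSeriesOnBall_zero a).r_le)

end Complex

section LambertSeries

variable {s w x : ℂ}

theorem norm_mul_pow_lt_one (hw : ‖w‖ < 1) (hx : ‖x‖ ≤ 1) (r : ℕ) : ‖w * x ^ r‖ < 1 := by
  rw [norm_mul, norm_pow]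
  exact mul_lt_one_of_nonneg_of_lt_one_left (norm_nonneg w) hw (pow_le_one₀ (norm_nonneg x) hx)

theorem summable_norm_multichoose_mul_mul_pow_pow_succ (hw : ‖w‖ < 1) (hx : ‖x‖ < 1) :
    Summable fun p : ℕ × ℕ ↦ ‖Ring.multichoose s p.2 * (w * x ^ p.2) ^ (p.1 + 1)‖ := by
  refine .of_nonneg_of_le (fun _ ↦ norm_nonneg _) (fun ⟨n, r⟩ ↦ ?_)
    ((summable_geometric_of_lt_one (norm_nonneg w) hw).mul_of_nonneg
      (Complex.summable_norm_multichoose_mul_pow s (norm_nonneg x) hx)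
      (fun _ ↦ by positivity) (fun _ ↦ by positivity))
  have hxr : ‖x‖ ^ r ≤ 1 := pow_le_one₀ (norm_nonneg x) hx.le
  calc ‖Ring.multichoose s r * (w * x ^ r) ^ (n + 1)‖
      = ‖Ring.multichoose s r‖ * ((‖w‖ * ‖x‖ ^ r) ^ n * (‖w‖ * ‖x‖ ^ r)) := by
        rw [norm_mul, norm_pow, norm_mul, norm_pow, pow_succ]
    _ ≤ ‖Ring.multichoose s r‖ * (‖w‖ ^ n * ‖x‖ ^ r) := by
        gcongr
        · exact mul_le_of_le_one_right (norm_nonneg w) hxr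
        · exact mul_le_of_le_one_left (by positivity) hw.le
    _ = ‖w‖ ^ n * (‖Ring.multichoose s r‖ * ‖x‖ ^ r) := by ring

theorem hasSum_pow_succ_div_one_sub_pow_cpow (hx : ‖x‖ < 1) (n : ℕ) :
    HasSum (fun r ↦ Ring.multichoose s r * (w * x ^ r) ^ (n + 1))
      (w ^ (n + 1) / (1 - x ^ (n + 1)) ^ s) := by
  have hxn : ‖x ^ (n + 1)‖ < 1 := by
    rw [norm_pow]; exact pow_lt_one₀ (norm_nonneg x) hx n.succ_ne_zero
  rw [← mul_one_div]
  refine ((Complex.hasSum_multichoose_mul_pow s hxn).mul_left _).congr_fun fun r ↦ ?_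
  rw [mul_pow, ← pow_mul, ← pow_mul']
  ring

theorem hasSum_multichoose_mul_div_one_sub (hx : ‖x‖ < 1) (hw : ‖w‖ < 1) (r : ℕ) :
    HasSum (fun n ↦ Ring.multichoose s r * (w * x ^ r) ^ (n + 1))
      (Ring.multichoose s r * (w * x ^ r / (1 - w * x ^ r))) := by
  have hy := norm_mul_pow_lt_one hw hx.le r
  rw [div_eq_mul_inv, ← mul_assoc]
  exact ((hasSum_geometric_of_norm_lt_one hy).mul_left _).congr_fun fun n ↦ by ring

theorem summable_norm_pow_succ_div_one_sub_pow_cpow (hw : ‖w‖ < 1) (hx : ‖x‖ < 1) :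
    Summable fun n : ℕ ↦ ‖w ^ (n + 1) / (1 - x ^ (n + 1)) ^ s‖ := by
  have h := summable_norm_multichoose_mul_mul_pow_pow_succ (s := s) hw hx
  refine .of_nonneg_of_le (fun _ ↦ norm_nonneg _) (fun n ↦ ?_) h.prod
  rw [← (hasSum_pow_succ_div_one_sub_pow_cpow hx n).tsum_eq]
  exact norm_tsum_le_tsum_norm (h.prod_factor n)

theorem summable_norm_multichoose_mul_div_one_sub (hw : ‖w‖ < 1) (hx : ‖x‖ < 1) :
    Summable fun r : ℕ ↦ ‖Ring.multichoose s r * (w * x ^ r / (1 - w * x ^ r))‖ := by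
  have h := (summable_norm_multichoose_mul_mul_pow_pow_succ (s := s) hw hx).prod_symm
  refine .of_nonneg_of_le (fun _ ↦ norm_nonneg _) (fun r ↦ ?_) h.prod
  rw [← (hasSum_multichoose_mul_div_one_sub hx hw r).tsum_eq]
  exact norm_tsum_le_tsum_norm (h.prod_factor r)

theorem tsum_pow_succ_div_one_sub_pow_cpow (hw : ‖w‖ < 1) (hx : ‖x‖ < 1) :
    ∑' n : ℕ, w ^ (n + 1) / (1 - x ^ (n + 1)) ^ s =
      ∑' r : ℕ, Ring.multichoose s r * (w * x ^ r / (1 - w * x ^ r)) := calc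
  _ = ∑' (n : ℕ) (r : ℕ), Ring.multichoose s r * (w * x ^ r) ^ (n + 1) :=
    tsum_congr fun n ↦ (hasSum_pow_succ_div_one_sub_pow_cpow hx n).tsum_eq.symm
  _ = ∑' (r : ℕ) (n : ℕ), Ring.multichoose s r * (w * x ^ r) ^ (n + 1) :=
    (Summable.tsum_comm (f := fun n r ↦ Ring.multichoose s r * (w * x ^ r) ^ (n + 1))
      (summable_norm_multichoose_mul_mul_pow_pow_succ hw hx).of_norm).symm
  _ = _ := tsum_congr fun r ↦ (hasSum_multichoose_mul_div_one_sub hx hw r).tsum_eq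

end LambertSeries

/-- For real `0 < q < 1`, any `s ∈ ℂ` and `t ∈ ℂ` with `Re t > 0`: all denominators
`1 - q^{t+r}` are nonzero, both series converge absolutely, and
`Σ_{n≥1} q^{nt}/([n]_q)^s = (1-q)^s Σ_{r≥0} ((s)_r/r!) q^{t+r}/(1-q^{t+r})`,
where `(s)_r = s(s+1)⋯(s+r-1)` is the rising factorial, `q^z = exp(z log q)`,
`[n]_q = (1-qⁿ)/(1-q)` and `w^s = exp(s log w)` for `w > 0`. -/
theorem stmt8 (q : ℝ) (hq0 : 0 < q) (hq1 : q < 1) (s t : ℂ) (ht : 0 < t.re) :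
    (∀ r : ℕ, (1 : ℂ) - Complex.exp ((t + (r : ℂ)) * (Real.log q : ℂ)) ≠ 0) ∧
    Summable (fun n : ℕ =>
      ‖Complex.exp (((n : ℂ) + 1) * t * (Real.log q : ℂ)) /
        (((1 - q ^ (n + 1)) / (1 - q) : ℝ) : ℂ) ^ s‖) ∧
    Summable (fun r : ℕ =>
      ‖(∏ i ∈ Finset.range r, (s + (i : ℂ))) / (r.factorial : ℂ) *
        (Complex.exp ((t + (r : ℂ)) * (Real.log q : ℂ)) /
          (1 - Complex.exp ((t + (r : ℂ)) * (Real.log q : ℂ))))‖) ∧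
    (∑' n : ℕ, Complex.exp (((n : ℂ) + 1) * t * (Real.log q : ℂ)) /
        (((1 - q ^ (n + 1)) / (1 - q) : ℝ) : ℂ) ^ s) =
      ((1 - q : ℝ) : ℂ) ^ s *
        ∑' r : ℕ, (∏ i ∈ Finset.range r, (s + (i : ℂ))) / (r.factorial : ℂ) *
          (Complex.exp ((t + (r : ℂ)) * (Real.log q : ℂ)) /
            (1 - Complex.exp ((t + (r : ℂ)) * (Real.log q : ℂ)))) := by
  set w : ℂ := Complex.exp (t * Real.log q)
  have hw : ‖w‖ < 1 := by
    rw [Complex.norm_exp, Real.exp_lt_one_iff]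
    simpa using mul_neg_of_pos_of_neg ht (Real.log_neg hq0 hq1)
  have hx : ‖(q : ℂ)‖ < 1 := by rwa [Complex.norm_real, Real.norm_of_nonneg hq0.le]
  have hnum (n : ℕ) : Complex.exp (((n : ℂ) + 1) * t * Real.log q) = w ^ (n + 1) := by
    rw [← Complex.exp_nat_mul]; push_cast; ring_nf
  have hden (n : ℕ) : (((1 - q ^ (n + 1)) / (1 - q) : ℝ) : ℂ) ^ s =
      (1 - (q : ℂ) ^ (n + 1)) ^ s / ((1 - q : ℝ) : ℂ) ^ s := by
    rw [Complex.ofReal_div, Complex.div_cpow_ofReal_nonneg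
      (sub_nonneg.2 (pow_le_one₀ hq0.le hq1.le)) (sub_nonneg.2 hq1.le)]
    norm_cast
  have hexp (r : ℕ) : Complex.exp ((t + r) * Real.log q) = w * (q : ℂ) ^ r := by
    rw [add_mul, Complex.exp_add, Complex.exp_nat_mul, ← Complex.ofReal_exp, Real.exp_log hq0]
  have hterm (n : ℕ) : w ^ (n + 1) / ((1 - (q : ℂ) ^ (n + 1)) ^ s / ((1 - q : ℝ) : ℂ) ^ s) =
      ((1 - q : ℝ) : ℂ) ^ s * (w ^ (n + 1) / (1 - (q : ℂ) ^ (n + 1)) ^ s) := by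
    rw [div_div_eq_mul_div, mul_comm, mul_div_assoc]
  simp only [hnum, hden, hexp, ← Ring.multichoose_eq_prod_range_div_factorial]
  refine ⟨fun r ↦ ?_, ?_, summable_norm_multichoose_mul_div_one_sub hw hx, ?_⟩
  · exact sub_ne_zero.2 fun h ↦ by simpa [← h] using norm_mul_pow_lt_one hw hx.le r
  · simpa only [hterm, norm_mul] using
      (summable_norm_pow_succ_div_one_sub_pow_cpow hw hx).mul_left ‖((1 - q : ℝ) : ℂ) ^ s‖
  · rw [tsum_congr hterm, tsum_mul_left, tsum_pow_succ_div_one_sub_pow_cpow hw hx]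
end

section
/- Let u ∈ ℝ and set s_k = 2πik/log 2 for k ∈ ℤ. Then the family (over k ∈ ℤ, k ≠ 0) of terms (π / sin(π(s_k − 1))) · e^{-2πiku} is absolutely summable, and Σ_{k ∈ ℤ, k ≠ 0} (π / sin(π(s_k − 1))) e^{-2πiku} = 2π Σ_{k=1}^∞ sin(2πku) / sinh(2π²k / log 2), where the series on the right converges absolutely. -/
/-!
With `a = 2π²/log 2` and `b = 2πu`, one has `π(s_k - 1) = i·a·k - π`, hence
`sin(π(s_k - 1)) = -i sinh(ak)` and the `k`-th term is `π · i e^{-ibk} / sinh(ak)`.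
Its modulus `π/|sinh(ak)|` decays like `e^{-a|k|}`, which gives absolute summability, and the
terms at `k` and `-k` add up to `2π sin(bk)/sinh(ak)`.
-/

open Real

theorem one_sub_exp_mul_exp_le_two_mul_sinh {a x : ℝ} (hax : a ≤ x) :
    (1 - exp (-2 * a)) * exp x ≤ 2 * sinh x := by
  have hneg : exp (-x) = exp (-2 * x) * exp x := by rw [← exp_add]; ring_nf
  have hle : exp (-2 * x) ≤ exp (-2 * a) := exp_le_exp.2 (by linarith)
  rw [sinh_eq, hneg]
  nlinarith [exp_pos x]

theorem summable_inv_sinh_mul {a : ℝ} (ha : 0 < a) :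
    Summable fun n : ℕ => (sinh (a * n))⁻¹ := by
  have hc : 0 < 1 - exp (-2 * a) := by
    rw [sub_pos, exp_lt_one_iff]; linarith
  refine ((summable_geometric_of_lt_one (exp_pos (-a)).le
    (exp_lt_one_iff.2 (by linarith))).mul_left (2 / (1 - exp (-2 * a)))).of_nonneg_of_le
    (fun n => inv_nonneg.2 (sinh_nonneg_iff.2 (by positivity))) fun n => ?_
  rcases Nat.eq_zero_or_pos n with rfl | hn
  · simp only [Nat.cast_zero, mul_zero, sinh_zero, inv_zero]; positivity
  have hbound := one_sub_exp_mul_exp_le_two_mul_sinh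
    (le_mul_of_one_le_right ha.le (Nat.one_le_cast.2 hn))
  calc (sinh (a * n))⁻¹ ≤ ((1 - exp (-2 * a)) * exp (a * n) / 2)⁻¹ :=
        inv_anti₀ (by positivity) (by linarith)
    _ = 2 / (1 - exp (-2 * a)) * exp (-a) ^ n := by
        rw [← exp_nat_mul, show (n:ℝ) * -a = -(a * n) by ring, exp_neg]
        field_simp

-- At `k = 0` this is `0` by the convention `x / 0 = 0`, matching the excluded index.
noncomputable def sinhFourierTerm (a b : ℝ) (k : ℤ) : ℂ :=
  Complex.I / (sinh (a * k) : ℂ) * Complex.exp ((-(b * k) : ℝ) * Complex.I)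

theorem sinhFourierTerm_zero (a b : ℝ) : sinhFourierTerm a b 0 = 0 := by
  simp [sinhFourierTerm]

theorem norm_sinhFourierTerm (a b : ℝ) (k : ℤ) :
    ‖sinhFourierTerm a b k‖ = |sinh (a * k)|⁻¹ := by
  rw [sinhFourierTerm, norm_mul, norm_div, Complex.norm_I, Complex.norm_exp_ofReal_mul_I,
    Complex.norm_real, norm_eq_abs, one_div, mul_one]

theorem sinhFourierTerm_add_neg (a b : ℝ) (k : ℤ) :
    sinhFourierTerm a b k + sinhFourierTerm a b (-k) =
      2 * ((sin (b * k) / sinh (a * k) : ℝ) : ℂ) := by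
  simp only [sinhFourierTerm, Int.cast_neg, mul_neg, neg_neg, sinh_neg, Complex.ofReal_neg,
    Complex.exp_mul_I, Complex.cos_neg, Complex.sin_neg, ← Complex.ofReal_cos,
    ← Complex.ofReal_sin, Complex.ofReal_div]
  linear_combination (-2 * (sin (b * k) : ℂ) / sinh (a * k)) * Complex.I_sq

theorem pi_div_sin_mul_exp_eq_sinhFourierTerm (L u : ℝ) (k : ℤ) :
    (π : ℂ) / Complex.sin ((π : ℂ) * (2 * (π : ℂ) * Complex.I * (k : ℂ) / (L : ℂ) - 1)) *
        Complex.exp (-(2 * (π : ℂ) * Complex.I * (k : ℂ) * (u : ℂ))) =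
      π * sinhFourierTerm (2 * π ^ 2 / L) (2 * π * u) k := by
  have hsin : (π : ℂ) * (2 * (π : ℂ) * Complex.I * (k : ℂ) / (L : ℂ) - 1) =
      ((2 * π ^ 2 / L * k : ℝ) : ℂ) * Complex.I - π := by
    push_cast; ring
  have hexp : -(2 * (π : ℂ) * Complex.I * (k : ℂ) * (u : ℂ)) =
      ((-(2 * π * u * k) : ℝ) : ℂ) * Complex.I := by
    push_cast; ring
  rw [hsin, hexp, Complex.sin_sub_pi, Complex.sin_mul_I, ← Complex.ofReal_sinh, sinhFourierTerm,
    div_neg, div_mul_eq_div_div, Complex.div_I]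
  ring

theorem summable_norm_sinhFourierTerm {a : ℝ} (ha : 0 < a) (b : ℝ) :
    Summable fun k : ℤ => ‖sinhFourierTerm a b k‖ := by
  have hnat : ∀ n : ℕ, |sinh (a * n)|⁻¹ = (sinh (a * n))⁻¹ := fun n => by
    rw [abs_of_nonneg (sinh_nonneg_iff.2 (by positivity))]
  refine .of_nat_of_neg ?_ ?_ <;>
    simpa only [norm_sinhFourierTerm, Int.cast_neg, Int.cast_natCast, mul_neg, sinh_neg,
      abs_neg, hnat] using summable_inv_sinh_mul ha

theorem summable_abs_sin_div_sinh {a : ℝ} (ha : 0 < a) (b : ℝ) :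
    Summable fun n : ℕ => |sin (b * (n + 1)) / sinh (a * (n + 1))| := by
  have hpos : ∀ n : ℕ, 0 < sinh (a * (n + 1)) := fun n => sinh_pos_iff.2 (by positivity)
  refine ((summable_nat_add_iff 1).2 (summable_inv_sinh_mul ha)).of_nonneg_of_le
    (fun n => abs_nonneg _) fun n => ?_
  rw [abs_div, abs_of_pos (hpos n), div_eq_mul_inv, Nat.cast_add_one]
  exact mul_le_of_le_one_left (inv_nonneg.2 (hpos n).le) (abs_sin_le_one _)

theorem tsum_sinhFourierTerm {a : ℝ} (ha : 0 < a) (b : ℝ) :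
    ∑' k : ℤ, sinhFourierTerm a b k =
      2 * ∑' n : ℕ, ((sin (b * (n + 1)) / sinh (a * (n + 1)) : ℝ) : ℂ) := by
  have h := (summable_norm_sinhFourierTerm ha b).of_norm.hasSum.nat_add_neg
  simp only [sinhFourierTerm_add_neg, sinhFourierTerm_zero, add_zero] at h
  rw [← h.tsum_eq, h.summable.tsum_eq_zero_add, tsum_mul_left]
  simp

/-- For `u ∈ ℝ` and `s_k = 2πik/log 2`, the family `(π/sin(π(s_k-1))) e^{-2πiku}` over
`k ∈ ℤ, k ≠ 0` is absolutely summable, and its sum equals the absolutely convergent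
real Fourier series `2π Σ_{k≥1} sin(2πku)/sinh(2π²k/log 2)`. -/
theorem stmt14 (u : ℝ) :
    Summable (fun k : ℤ => ‖(if k = 0 then (0 : ℂ) else
      (π : ℂ) / Complex.sin ((π : ℂ) *
        (2 * (π : ℂ) * Complex.I * (k : ℂ) / (Real.log 2 : ℂ) - 1)) *
        Complex.exp (-(2 * (π : ℂ) * Complex.I * (k : ℂ) * (u : ℂ))))‖) ∧
    Summable (fun k : ℕ =>
      |Real.sin (2 * π * ((k : ℝ) + 1) * u) /
        Real.sinh (2 * π ^ 2 * ((k : ℝ) + 1) / Real.log 2)|) ∧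
    (∑' k : ℤ, (if k = 0 then (0 : ℂ) else
      (π : ℂ) / Complex.sin ((π : ℂ) *
        (2 * (π : ℂ) * Complex.I * (k : ℂ) / (Real.log 2 : ℂ) - 1)) *
        Complex.exp (-(2 * (π : ℂ) * Complex.I * (k : ℂ) * (u : ℂ))))) =
      2 * (π : ℂ) * ∑' k : ℕ,
        ((Real.sin (2 * π * ((k : ℝ) + 1) * u) /
          Real.sinh (2 * π ^ 2 * ((k : ℝ) + 1) / Real.log 2) : ℝ) : ℂ) := by
  have ha : 0 < 2 * π ^ 2 / Real.log 2 := div_pos (by positivity) (log_pos one_lt_two)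
  have hsin (x : ℝ) : 2 * π * x * u = 2 * π * u * x := by ring
  have hsinh (x : ℝ) : 2 * π ^ 2 * x / Real.log 2 = 2 * π ^ 2 / Real.log 2 * x := by ring
  have hite (k : ℤ) :
      (if k = 0 then (0 : ℂ) else π * sinhFourierTerm (2 * π ^ 2 / Real.log 2) (2 * π * u) k) =
        π * sinhFourierTerm (2 * π ^ 2 / Real.log 2) (2 * π * u) k := by
    split_ifs with hk
    · rw [hk, sinhFourierTerm_zero, mul_zero]
    · rfl
  simp_rw [pi_div_sin_mul_exp_eq_sinhFourierTerm, hite, hsin, hsinh]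
  refine ⟨?_, summable_abs_sin_div_sinh ha _, ?_⟩
  · simpa only [norm_mul] using (summable_norm_sinhFourierTerm ha _).mul_left ‖(π : ℂ)‖
  · rw [tsum_mul_left, tsum_sinhFourierTerm ha]
    ring
end

section
/- For every u ∈ ℝ, the log-periodic fluctuation P(u) = (2π/log 2) Σ_{k=1}^∞ sin(2πku)/sinh(2π²k/log 2) satisfies the uniform bound |P(u)| ≤ 7.8 × 10^{-12}; in particular, the complex poles on the imaginary axis contribute only a minute oscillation to the large-t expansion of the conductance. -/
open Real Filter Topology

/-!
Put `a = 2π²/log 2 ≈ 28.48`. Since `sinh (a + a k) ≥ sinh a · e^{a k}`, the series is dominated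
termwise by the geometric series `(sinh a)⁻¹ e^{-a k}`, so
`|P(u)| ≤ (2π/log 2) / (sinh a · (1 - e^{-a}))`, and `sinh a ≈ 1.166 × 10¹²` makes this
about `7.78 × 10⁻¹²`.
-/

namespace Real

lemma sinh_mul_exp_le_sinh_add (a : ℝ) {b : ℝ} (hb : 0 ≤ b) :
    sinh a * exp b ≤ sinh (a + b) := by
  have hsinh : 0 ≤ sinh b := sinh_nonneg_iff.mpr hb
  have hgap : 0 ≤ cosh a - sinh a := by rw [cosh_sub_sinh]; positivity
  rw [sinh_add, ← cosh_add_sinh]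
  nlinarith

lemma abs_div_sinh_mul_succ_le {a : ℝ} (ha : 0 < a) {c : ℝ} (hc : |c| ≤ 1) (k : ℕ) :
    |c / sinh (a * (k + 1))| ≤ (sinh a)⁻¹ * exp (-a) ^ k := by
  have hsinh_a : 0 < sinh a := sinh_pos_iff.mpr ha
  have hlower : sinh a * exp (a * k) ≤ sinh (a * (k + 1)) := by
    rw [mul_add_one, add_comm]
    exact sinh_mul_exp_le_sinh_add a (by positivity)
  have hpos : 0 < sinh a * exp (a * k) := by positivity
  calc |c / sinh (a * (k + 1))| = |c| / sinh (a * (k + 1)) := by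
        rw [abs_div, abs_of_pos (hpos.trans_le hlower)]
    _ ≤ 1 / (sinh a * exp (a * k)) := div_le_div₀ zero_le_one hc hpos hlower
    _ = (sinh a)⁻¹ * exp (-a) ^ k := by
        rw [← exp_nat_mul, one_div, mul_inv, ← exp_neg]
        ring_nf

lemma abs_tsum_div_sinh_mul_succ_le {a : ℝ} (ha : 0 < a) {c : ℕ → ℝ} (hc : ∀ k, |c k| ≤ 1) :
    |∑' k : ℕ, c k / sinh (a * (k + 1))| ≤ (sinh a)⁻¹ * (1 - exp (-a))⁻¹ := by
  have hr : exp (-a) < 1 := exp_lt_one_iff.mpr (neg_lt_zero.mpr ha)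
  have hgeom : Summable fun k : ℕ ↦ (sinh a)⁻¹ * exp (-a) ^ k :=
    (summable_geometric_of_lt_one (exp_pos _).le hr).mul_left _
  have hbound := fun k ↦ abs_div_sinh_mul_succ_le ha (hc k) k
  have habs : Summable fun k : ℕ ↦ ‖c k / sinh (a * (k + 1))‖ :=
    hgeom.of_nonneg_of_le (fun _ ↦ norm_nonneg _) hbound
  calc |∑' k : ℕ, c k / sinh (a * (k + 1))| ≤ ∑' k : ℕ, |c k / sinh (a * (k + 1))| :=
        norm_tsum_le_tsum_norm habs
    _ ≤ ∑' k : ℕ, (sinh a)⁻¹ * exp (-a) ^ k := habs.tsum_le_tsum hbound hgeom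
    _ = (sinh a)⁻¹ * (1 - exp (-a))⁻¹ := by
        rw [tsum_mul_left, tsum_geometric_of_lt_one (exp_pos _).le hr]

lemma two_pi_div_log_two_le : 2 * π / log 2 ≤ 9.06473 := by
  have hlog := log_two_gt_d9
  have hπ := pi_lt_d20
  rw [div_le_iff₀ (by linarith)]
  nlinarith

lemma le_two_pi_sq_div_log_two : 28.47765 ≤ 2 * π ^ 2 / log 2 := by
  have hlog := log_two_lt_d9
  have hπ := pi_gt_d20
  rw [le_div_iff₀ (by positivity)]
  nlinarith

lemma le_exp_28_47765 : 2.33175e12 ≤ exp 28.47765 := by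
  have hint : 1.446256e12 ≤ exp 28 := by
    calc (1.446256e12 : ℝ) ≤ 2.7182818283 ^ 28 := by norm_num
      _ ≤ exp 1 ^ 28 := pow_le_pow_left₀ (by norm_num) exp_one_gt_d9.le 28
      _ = exp 28 := by rw [← exp_nat_mul]; norm_num
  have hfrac : 1.61227 ≤ exp 0.47765 := by
    refine le_trans ?_ (sum_le_exp_of_nonneg (x := 0.47765) (by norm_num) 7)
    simp only [Finset.sum_range_succ, Finset.sum_range_zero]
    norm_num [Nat.factorial]
  rw [show (28.47765 : ℝ) = 28 + 0.47765 by norm_num, exp_add]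
  nlinarith [exp_pos 28]

lemma le_exp_two_pi_sq_div_log_two : 2.33175e12 ≤ exp (2 * π ^ 2 / log 2) :=
  le_exp_28_47765.trans (exp_le_exp.mpr le_two_pi_sq_div_log_two)

lemma le_sinh_two_pi_sq_div_log_two : 1.16587e12 ≤ sinh (2 * π ^ 2 / log 2) := by
  have hexp := le_exp_two_pi_sq_div_log_two
  have hinv : exp (-(2 * π ^ 2 / log 2)) ≤ 1 :=
    exp_le_one_iff.mpr (by linarith [le_two_pi_sq_div_log_two])
  rw [sinh_eq]
  linarith

lemma exp_neg_two_pi_sq_div_log_two_le : exp (-(2 * π ^ 2 / log 2)) ≤ 4.3e-13 := by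
  rw [exp_neg, inv_le_comm₀ (exp_pos _) (by norm_num)]
  exact le_trans (by norm_num) le_exp_two_pi_sq_div_log_two

end Real

/-- The log-periodic fluctuation `P(u) = (2π/log 2) Σ_{k≥1} sin(2πku)/sinh(2π²k/log 2)`
arising from the complex poles `s_k = 2πik/log 2` satisfies the uniform bound
`|P(u)| ≤ 7.8 × 10⁻¹²`. -/
theorem stmt15 (u : ℝ) :
    |(2 * π / Real.log 2) * ∑' k : ℕ,
        Real.sin (2 * π * ((k : ℝ) + 1) * u) /
          Real.sinh (2 * π ^ 2 * ((k : ℝ) + 1) / Real.log 2)| ≤ 7.8e-12 := by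
  set a := 2 * π ^ 2 / Real.log 2
  have ha : 0 < a := lt_of_lt_of_le (by norm_num) le_two_pi_sq_div_log_two
  have harg : ∀ k : ℕ, 2 * π ^ 2 * ((k : ℝ) + 1) / Real.log 2 = a * (k + 1) := fun k ↦ by ring
  simp_rw [harg]
  have hsum := abs_tsum_div_sinh_mul_succ_le ha (c := fun k : ℕ ↦ Real.sin (2 * π * (k + 1) * u))
    fun _ ↦ abs_sin_le_one _
  have hsinh : (sinh a)⁻¹ ≤ (1.16587e12 : ℝ)⁻¹ :=
    inv_anti₀ (by norm_num) le_sinh_two_pi_sq_div_log_two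
  have hr : 1 - 4.3e-13 ≤ 1 - exp (-a) := by linarith [exp_neg_two_pi_sq_div_log_two_le]
  have hgeom : (1 - exp (-a))⁻¹ ≤ (1 - 4.3e-13 : ℝ)⁻¹ := inv_anti₀ (by norm_num) hr
  rw [abs_mul, abs_of_pos (div_pos two_pi_pos (log_pos one_lt_two))]
  calc 2 * π / Real.log 2 * |∑' k : ℕ, Real.sin (2 * π * (k + 1) * u) / sinh (a * (k + 1))|
      ≤ 9.06473 * ((1.16587e12 : ℝ)⁻¹ * (1 - 4.3e-13 : ℝ)⁻¹) := by
        gcongr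
        · exact two_pi_div_log_two_le
        · refine hsum.trans (mul_le_mul hsinh hgeom ?_ (by norm_num))
          exact inv_nonneg.mpr (le_trans (by norm_num) hr)
    _ ≤ 7.8e-12 := by norm_num
end
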